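/- arXiv:2104.09977 — 8 statements merged into one kernel-verified Lean document; each statement's English description precedes it below -/
import Mathlib

section
/- Let L be a real m × m matrix with the discrete maximum-principle property: for every w ∈ ℝ^m and every index i₀ such that w_{i₀} = max_i w_i, one has (Lw)_{i₀} ≤ 0. Then {exp(τL)}_{τ≥0} is a contraction semigroup in the supremum norm, i.e., ‖exp(τL) w‖ ≤ ‖w‖ for every τ ≥ 0 and every w ∈ ℝ^m. -/
/-!
Testing the maximum principle on `w = 1` and on `w = -eⱼ` shows that `L` has nonpositive row sums
and nonnegative off-diagonal entries. Hence for `c ≥ max_i (-L i i)` the matrix `L + c • 1` is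
entrywise nonnegative with row sums at most `c`, so its `ℓ^∞` operator norm (the largest row
`ℓ¹` norm) is at most `c`. Since `c • 1` is central,
`‖exp (τ • L)‖ = e^{-τc} ‖exp (τ • (L + c • 1))‖ ≤ e^{-τc} e^{τc} = 1`.
-/

open NormedSpace

section BanachAlgebra

variable {𝔸 : Type*} [NormedRing 𝔸] [NormedAlgebra ℝ 𝔸]

theorem norm_exp_le_exp_norm [NormOneClass 𝔸] (x : 𝔸) : ‖exp x‖ ≤ Real.exp ‖x‖ := by
  rw [exp_eq_tsum ℝ, Real.exp_eq_exp_ℝ, exp_eq_tsum_div]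
  refine (norm_tsum_le_tsum_norm (norm_expSeries_summable' x)).trans ?_
  refine Summable.tsum_le_tsum (fun n => ?_) (norm_expSeries_summable' x)
    (Real.summable_pow_div_factorial ‖x‖)
  rw [norm_smul, div_eq_inv_mul, norm_inv, Real.norm_natCast]
  exact mul_le_mul_of_nonneg_left (norm_pow_le x n) (by positivity)

theorem exp_add_algebraMap [CompleteSpace 𝔸] (x : 𝔸) (s : ℝ) :
    exp (x + algebraMap ℝ 𝔸 s) = Real.exp s • exp x := by
  have hball : ∀ y : 𝔸, y ∈ Metric.eball 0 (expSeries ℝ 𝔸).radius := fun y => by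
    simp [expSeries_radius_eq_top]
  rw [exp_add_of_commute_of_mem_ball (Algebra.commutes s x).symm (hball _) (hball _),
    ← algebraMap_exp_comm, Real.exp_eq_exp_ℝ, ← Algebra.commutes, Algebra.smul_def]

theorem norm_exp_le_exp_norm_add_algebraMap_sub [NormOneClass 𝔸] [CompleteSpace 𝔸] (x : 𝔸)
    (s : ℝ) : ‖exp x‖ ≤ Real.exp (‖x + algebraMap ℝ 𝔸 s‖ - s) :=
  calc ‖exp x‖ = Real.exp (-s) * ‖exp (x + algebraMap ℝ 𝔸 s)‖ := by
        rw [exp_add_algebraMap, norm_smul, Real.norm_of_nonneg (Real.exp_pos _).le, ← mul_assoc,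
          ← Real.exp_add, neg_add_cancel, Real.exp_zero, one_mul]
    _ ≤ Real.exp (-s) * Real.exp ‖x + algebraMap ℝ 𝔸 s‖ := by
        gcongr; exact norm_exp_le_exp_norm _
    _ = Real.exp (‖x + algebraMap ℝ 𝔸 s‖ - s) := by rw [← Real.exp_add, neg_add_eq_sub]

end BanachAlgebra

namespace Matrix

variable {ι : Type*} [Fintype ι]

def HasMaxPrinciple (L : Matrix ι ι ℝ) : Prop :=
  ∀ (w : ι → ℝ) (i₀ : ι), (∀ i, w i ≤ w i₀) → (L *ᵥ w) i₀ ≤ 0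

namespace HasMaxPrinciple

variable {L : Matrix ι ι ℝ} (hL : L.HasMaxPrinciple)
include hL

theorem sum_row_nonpos (i : ι) : ∑ j, L i j ≤ 0 := by
  simpa [mulVec, dotProduct] using hL (fun _ => 1) i fun _ => le_rfl

theorem nonneg_of_ne [DecidableEq ι] {i j : ι} (hij : i ≠ j) : 0 ≤ L i j := by
  have h := hL (-Pi.single j 1) i fun k => by
    by_cases hk : k = j <;> simp [hk, hij]
  simpa [mulVec_neg, mulVec_single] using h

end HasMaxPrinciple

section LinftyOp

attribute [local instance] Matrix.linftyOpNormedAddCommGroup Matrix.linftyOpNormedRing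
  Matrix.linftyOpNormedAlgebra

variable [DecidableEq ι] {L : Matrix ι ι ℝ}

theorem linfty_opNorm_add_algebraMap_le (hoff : ∀ i j, i ≠ j → 0 ≤ L i j)
    (hrow : ∀ i, ∑ j, L i j ≤ 0) {c : ℝ} (hc0 : 0 ≤ c) (hc : ∀ i, -L i i ≤ c) :
    ‖L + algebraMap ℝ _ c‖ ≤ c := by
  have hentry : ∀ i j, (L + algebraMap ℝ _ c) i j = L i j + if i = j then c else 0 := by
    intro i j
    simp [algebraMap_matrix_apply]
  -- the `ℓ^∞` operator norm is the sup norm of the rows, each measured in `ℓ¹`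
  change ‖fun i => WithLp.toLp 1 ((L + algebraMap ℝ _ c) i)‖ ≤ c
  refine (pi_norm_le_iff_of_nonneg hc0).2 fun i => ?_
  have hnonneg : ∀ j, 0 ≤ (L + algebraMap ℝ _ c) i j := fun j => by
    rw [hentry]
    split_ifs with hij
    · subst hij; linarith [hc i]
    · simpa using hoff i j hij
  calc ‖WithLp.toLp 1 ((L + algebraMap ℝ _ c) i)‖
      = ∑ j, (L + algebraMap ℝ _ c) i j := by
        rw [PiLp.norm_eq_of_L1]
        exact Finset.sum_congr rfl fun j _ => Real.norm_of_nonneg (hnonneg j)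
    _ = ∑ j, L i j + c := by
        simp only [hentry, Finset.sum_add_distrib, Finset.sum_ite_eq, Finset.mem_univ, if_true]
    _ ≤ c := by linarith [hrow i]

theorem norm_exp_smul_le_one (hoff : ∀ i j, i ≠ j → 0 ≤ L i j) (hrow : ∀ i, ∑ j, L i j ≤ 0)
    {τ : ℝ} (hτ : 0 ≤ τ) : ‖NormedSpace.exp (τ • L)‖ ≤ 1 := by
  rcases isEmpty_or_nonempty ι with _ | _
  · simp [Subsingleton.elim (NormedSpace.exp (τ • L)) 0]
  set c := ∑ i, |L i i|
  have hc : ∀ i, -L i i ≤ c := fun i =>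
    (neg_le_abs _).trans (Finset.single_le_sum (fun k _ => abs_nonneg (L k k)) (Finset.mem_univ i))
  have hshift : τ • L + algebraMap ℝ _ (τ * c) = τ • (L + algebraMap ℝ _ c) := by
    rw [smul_add, map_mul, Algebra.smul_def τ (algebraMap ℝ _ c)]
  calc ‖NormedSpace.exp (τ • L)‖ ≤ Real.exp (‖τ • L + algebraMap ℝ _ (τ * c)‖ - τ * c) :=
        norm_exp_le_exp_norm_add_algebraMap_sub _ _
    _ ≤ Real.exp 0 := by
        gcongr
        rw [hshift, norm_smul, Real.norm_of_nonneg hτ, sub_nonpos]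
        exact mul_le_mul_of_nonneg_left
          (linfty_opNorm_add_algebraMap_le hoff hrow (by positivity) hc) hτ
    _ = 1 := Real.exp_zero

theorem norm_exp_smul_mulVec_le (hoff : ∀ i j, i ≠ j → 0 ≤ L i j) (hrow : ∀ i, ∑ j, L i j ≤ 0)
    {τ : ℝ} (hτ : 0 ≤ τ) (w : ι → ℝ) : ‖NormedSpace.exp (τ • L) *ᵥ w‖ ≤ ‖w‖ :=
  calc ‖NormedSpace.exp (τ • L) *ᵥ w‖ ≤ ‖NormedSpace.exp (τ • L)‖ * ‖w‖ :=
        linfty_opNorm_mulVec _ _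
    _ ≤ ‖w‖ := mul_le_of_le_one_left (norm_nonneg w) (norm_exp_smul_le_one hoff hrow hτ)

end LinftyOp

end Matrix

/-- If `L` satisfies the discrete maximum-principle property (whenever `w` attains its maximum
at index `i₀`, `(Lw)_{i₀} ≤ 0`), then `{exp(τL)}_{τ ≥ 0}` is a contraction semigroup in the
supremum norm: `‖exp(τL) w‖ ≤ ‖w‖` for all `τ ≥ 0` and all `w`. -/
theorem stmt_3 (m : ℕ) (L : Matrix (Fin m) (Fin m) ℝ)
    (hL : ∀ (w : Fin m → ℝ) (i₀ : Fin m), (∀ i, w i ≤ w i₀) → L.mulVec w i₀ ≤ 0) :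
    ∀ τ : ℝ, 0 ≤ τ → ∀ w : Fin m → ℝ,
      ‖(NormedSpace.exp (τ • L)).mulVec w‖ ≤ ‖w‖ := by
  have hmax : L.HasMaxPrinciple := hL
  intro τ hτ w
  exact Matrix.norm_exp_smul_mulVec_le (fun i j => hmax.nonneg_of_ne) hmax.sum_row_nonpos hτ w
end

section
/- Let γ > 0, κ > 0, τ > 0, and let L be a real m × m matrix with ‖exp(t L_κ)‖_∞ ≤ e^{−κt} for all t ≥ 0, where L_κ = L − κI. Let N : ℝ^m → ℝ^m satisfy ‖N(w)‖ ≤ κγ whenever ‖w‖ ≤ γ. Let s ≥ 1, let a_{ij} ≥ 0 for 1 ≤ i ≤ s, 0 ≤ j ≤ i−1, and set c₀ = 0 and c_i = Σ_{j=0}^{i−1} a_{ij} with c_s = 1. Assume (i) 0 = c₀ ≤ c₁ ≤ ⋯ ≤ c_s = 1, and (ii) for each i = 1,…,s the function g_i(x) = e^{−c_i x} + x Σ_{j=0}^{i−1} a_{ij} e^{−(c_i−c_j)x} is nonincreasing on [0, ∞). Define the sIFRK stages by u^{(0)} = uⁿ and u^{(i)} = exp(c_i τ L_κ) uⁿ +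 τ Σ_{j=0}^{i−1} a_{ij} exp((c_i − c_j) τ L_κ) N(u^{(j)}) for 1 ≤ i ≤ s, and set u^{n+1} = u^{(s)}. Then if ‖uⁿ‖ ≤ γ, one has ‖u^{(i)}‖ ≤ γ for all 1 ≤ i ≤ s; in particular ‖u^{n+1}‖ ≤ γ for every τ > 0. -/
attribute [local instance] Matrix.linftyOpNormedRing Matrix.linftyOpNormedAlgebra

/-!
Every stage is a nonnegative combination of semigroup evaluations. Bounding
`‖exp(t L_κ)‖_∞` by `e^{-κt}` and the nonlinear terms by `κγ` (inductively, the earlier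
stages lie in the `γ`-ball) gives `‖u^{(i)}‖ ≤ γ gᵢ(κτ)`, and `gᵢ(κτ) ≤ gᵢ(0) = 1` by the
monotonicity of `gᵢ`.
-/

open Finset

/-- The function `gᵢ` of the abscissas `c` and of the `i`-th row `a` of the Butcher table. -/
noncomputable def stageFun (a c : ℕ → ℝ) (i : ℕ) (x : ℝ) : ℝ :=
  Real.exp (-(c i) * x) + x * ∑ j ∈ range i, a j * Real.exp (-(c i - c j) * x)

@[simp]
lemma stageFun_zero (a c : ℕ → ℝ) (i : ℕ) : stageFun a c i 0 = 1 := by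
  simp [stageFun]

section Semigroup

variable {n : Type*} [Fintype n] [DecidableEq n] {Lκ : Matrix n n ℝ} {κ : ℝ}

lemma norm_exp_mulVec_le (hsemi : ∀ t : ℝ, 0 ≤ t → ‖NormedSpace.exp (t • Lκ)‖ ≤ Real.exp (-κ * t))
    {t : ℝ} (ht : 0 ≤ t) (v : n → ℝ) :
    ‖(NormedSpace.exp (t • Lκ)).mulVec v‖ ≤ Real.exp (-κ * t) * ‖v‖ :=
  (Matrix.linfty_opNorm_mulVec _ _).trans <|
    mul_le_mul_of_nonneg_right (hsemi t ht) (norm_nonneg _)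

lemma norm_stage_le (hsemi : ∀ t : ℝ, 0 ≤ t → ‖NormedSpace.exp (t • Lκ)‖ ≤ Real.exp (-κ * t))
    {γ τ : ℝ} (hτ : 0 ≤ τ) {a c : ℕ → ℝ} {i : ℕ} (ha : ∀ j < i, 0 ≤ a j) (hci : 0 ≤ c i)
    (hcj : ∀ j < i, c j ≤ c i) {v : n → ℝ} (hv : ‖v‖ ≤ γ) {w : ℕ → n → ℝ}
    (hw : ∀ j < i, ‖w j‖ ≤ κ * γ) :
    ‖(NormedSpace.exp ((c i * τ) • Lκ)).mulVec v +
        τ • ∑ j ∈ range i, a j • (NormedSpace.exp (((c i - c j) * τ) • Lκ)).mulVec (w j)‖ ≤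
      γ * stageFun a c i (κ * τ) := by
  have hlin : ‖(NormedSpace.exp ((c i * τ) • Lκ)).mulVec v‖ ≤ Real.exp (-(c i) * (κ * τ)) * γ :=
    calc _ ≤ Real.exp (-κ * (c i * τ)) * ‖v‖ := norm_exp_mulVec_le hsemi (by positivity) v
      _ ≤ Real.exp (-κ * (c i * τ)) * γ := by gcongr
      _ = Real.exp (-(c i) * (κ * τ)) * γ := by ring_nf
  have hterm : ∀ j ∈ range i,
      ‖a j • (NormedSpace.exp (((c i - c j) * τ) • Lκ)).mulVec (w j)‖ ≤
        κ * γ * (a j * Real.exp (-(c i - c j) * (κ * τ))) := by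
    intro j hj
    have hj := mem_range.mp hj
    have hcij : 0 ≤ (c i - c j) * τ := mul_nonneg (sub_nonneg.mpr (hcj j hj)) hτ
    calc _ = a j * ‖(NormedSpace.exp (((c i - c j) * τ) • Lκ)).mulVec (w j)‖ := by
          rw [norm_smul, Real.norm_of_nonneg (ha j hj)]
      _ ≤ a j * (Real.exp (-κ * ((c i - c j) * τ)) * (κ * γ)) := by
          gcongr
          · exact ha j hj
          · exact (norm_exp_mulVec_le hsemi hcij _).trans (by gcongr; exact hw j hj)
      _ = κ * γ * (a j * Real.exp (-(c i - c j) * (κ * τ))) := by ring_nf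
  have hnonlin : ‖τ • ∑ j ∈ range i,
        a j • (NormedSpace.exp (((c i - c j) * τ) • Lκ)).mulVec (w j)‖ ≤
      τ * (κ * γ * ∑ j ∈ range i, a j * Real.exp (-(c i - c j) * (κ * τ))) := by
    rw [norm_smul, Real.norm_of_nonneg hτ, mul_sum]
    gcongr
    exact (norm_sum_le _ _).trans (sum_le_sum hterm)
  calc _ ≤ _ := norm_add_le _ _
    _ ≤ _ := add_le_add hlin hnonlin
    _ = γ * stageFun a c i (κ * τ) := by unfold stageFun; ring

end Semigroup

theorem stmt_4_general (m : ℕ) (γ κ τ : ℝ) (hκ : 0 < κ) (hτ : 0 < τ)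
    (Lκ : Matrix (Fin m) (Fin m) ℝ)
    (hsemi : ∀ t : ℝ, 0 ≤ t → ‖NormedSpace.exp (t • Lκ)‖ ≤ Real.exp (-κ * t))
    (N : (Fin m → ℝ) → (Fin m → ℝ))
    (hN : ∀ w : Fin m → ℝ, ‖w‖ ≤ γ → ‖N w‖ ≤ κ * γ)
    (s : ℕ)
    (a : ℕ → ℕ → ℝ) (c : ℕ → ℝ)
    (ha : ∀ i, 1 ≤ i → i ≤ s → ∀ j < i, 0 ≤ a i j)
    (hc0 : c 0 = 0)
    (hmono : ∀ i < s, c i ≤ c (i + 1))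
    (hg : ∀ i, 1 ≤ i → i ≤ s → ∀ x y : ℝ, 0 ≤ x → x ≤ y →
      Real.exp (-(c i) * y) + y * ∑ j ∈ Finset.range i, a i j * Real.exp (-(c i - c j) * y) ≤
        Real.exp (-(c i) * x) + x * ∑ j ∈ Finset.range i, a i j * Real.exp (-(c i - c j) * x))
    (un : Fin m → ℝ) (hun : ‖un‖ ≤ γ)
    (u : ℕ → (Fin m → ℝ)) (hu0 : u 0 = un)
    (hu : ∀ i, 1 ≤ i → i ≤ s →
      u i = (NormedSpace.exp ((c i * τ) • Lκ)).mulVec un +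
        τ • ∑ j ∈ Finset.range i,
          a i j • (NormedSpace.exp (((c i - c j) * τ) • Lκ)).mulVec (N (u j))) :
    ∀ i, 1 ≤ i → i ≤ s → ‖u i‖ ≤ γ := by
  have hcmono : MonotoneOn c (Set.Iic s) :=
    monotoneOn_of_le_add_one Set.ordConnected_Iic fun k _ _ hk => hmono k hk
  have hγ : 0 ≤ γ := (norm_nonneg _).trans hun
  have hstages : ∀ i ≤ s, ‖u i‖ ≤ γ := by
    intro i
    induction i using Nat.strong_induction_on with
    | _ i ih =>
      intro his
      obtain rfl | hi := Nat.eq_zero_or_pos i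
      · exact hu0 ▸ hun
      have hcj : ∀ j < i, c j ≤ c i := fun j hj =>
        hcmono (Set.mem_Iic.mpr (hj.le.trans his)) (Set.mem_Iic.mpr his) hj.le
      have hci : 0 ≤ c i := hc0 ▸ hcj 0 hi
      calc ‖u i‖ ≤ γ * stageFun (a i) c i (κ * τ) := hu i hi his ▸
            norm_stage_le hsemi hτ.le (ha i hi his) hci hcj hun
              fun j hj => hN _ (ih j hj (hj.le.trans his))
        _ ≤ γ * stageFun (a i) c i 0 := by
            gcongr
            exact hg i hi his 0 (κ * τ) le_rfl (by positivity)
        _ = γ := by rw [stageFun_zero, mul_one]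
  exact fun i _ his => hstages i his

/-- Theorem 3.2: unconditional MBP preservation for the sIFRK method in Butcher form.
Under nondecreasing abscissas and nonincreasing stage functions
`gᵢ(x) = e^{−cᵢx} + x Σ_{j<i} aᵢⱼ e^{−(cᵢ−cⱼ)x}`, if `‖uⁿ‖ ≤ γ` then all stages,
in particular `u^{n+1} = u^{(s)}`, are bounded by `γ` for any `τ > 0`. -/
theorem stmt_4 (m : ℕ) (γ κ τ : ℝ) (hγ : 0 < γ) (hκ : 0 < κ) (hτ : 0 < τ)
    (L Lκ : Matrix (Fin m) (Fin m) ℝ)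
    (hLκ : Lκ = L - κ • (1 : Matrix (Fin m) (Fin m) ℝ))
    (hsemi : ∀ t : ℝ, 0 ≤ t → ‖NormedSpace.exp (t • Lκ)‖ ≤ Real.exp (-κ * t))
    (N : (Fin m → ℝ) → (Fin m → ℝ))
    (hN : ∀ w : Fin m → ℝ, ‖w‖ ≤ γ → ‖N w‖ ≤ κ * γ)
    (s : ℕ) (hs : 1 ≤ s)
    (a : ℕ → ℕ → ℝ) (c : ℕ → ℝ)
    (ha : ∀ i, 1 ≤ i → i ≤ s → ∀ j < i, 0 ≤ a i j)
    (hc0 : c 0 = 0)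
    (hci : ∀ i, 1 ≤ i → i ≤ s → c i = ∑ j ∈ Finset.range i, a i j)
    (hcs : c s = 1)
    (hmono : ∀ i < s, c i ≤ c (i + 1))
    (hg : ∀ i, 1 ≤ i → i ≤ s → ∀ x y : ℝ, 0 ≤ x → x ≤ y →
      Real.exp (-(c i) * y) + y * ∑ j ∈ Finset.range i, a i j * Real.exp (-(c i - c j) * y) ≤
        Real.exp (-(c i) * x) + x * ∑ j ∈ Finset.range i, a i j * Real.exp (-(c i - c j) * x))
    (un : Fin m → ℝ) (hun : ‖un‖ ≤ γ)
    (u : ℕ → (Fin m → ℝ)) (hu0 : u 0 = un)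
    (hu : ∀ i, 1 ≤ i → i ≤ s →
      u i = (NormedSpace.exp ((c i * τ) • Lκ)).mulVec un +
        τ • ∑ j ∈ Finset.range i,
          a i j • (NormedSpace.exp (((c i - c j) * τ) • Lκ)).mulVec (N (u j))) :
    ∀ i, 1 ≤ i → i ≤ s → ‖u i‖ ≤ γ :=
  stmt_4_general m γ κ τ hκ hτ Lκ hsemi N hN s a c ha hc0 hmono hg un hun u hu0 hu
end

section
/- Let γ > 0, κ > 0, τ > 0, and let L be a real m × m matrix with ‖exp(t L_κ)‖_∞ ≤ e^{−κt} for all t ≥ 0, where L_κ = L − κI. Let N : ℝ^m → ℝ^m satisfy ‖N(w)‖ ≤ κγ whenever ‖w‖ ≤ γ. Fix i ≥ 1 and coefficients a_{i0}, …, a_{i,i−1} ≥ 0, abscissas 0 = c₀ ≤ c₁ ≤ ⋯ ≤ c_i. Suppose vectors u^{(0)}, …, u^{(i−1)} ∈ ℝ^m all satisfy ‖u^{(j)}‖ ≤ γ, and define u^{(i)} = exp(c_i τ L_κ) u^{(0)} + τ Σ_{j=0}^{i−1} a_{ij} exp((c_i − c_j) τ L_κ) N(u^{(j)}). Then ‖u^{(i)}‖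 ≤ g_i(κτ) γ, where g_i(x) = e^{−c_i x} + x Σ_{j=0}^{i−1} a_{ij} e^{−(c_i−c_j)x}. -/
attribute [local instance] Matrix.linftyOpNormedRing Matrix.linftyOpNormedAlgebra

/-! Every term of the stage is a point of the `γ`-ball, or a value of `N` there, propagated by
`t ↦ exp(t L_κ)` over a time `t ≥ 0` (the abscissas increase from `c₀ = 0`), so its norm is at
most `e^{-κt} γ`, resp. `e^{-κt} κγ`. The triangle inequality and collecting the factors `κτ`
give `gᵢ(κτ) γ`. -/

theorem monotoneOn_Iic_of_le_succ {α : Type*} [Preorder α] {c : ℕ → α} {i : ℕ}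
    (h : ∀ j < i, c j ≤ c (j + 1)) : MonotoneOn c (Set.Iic i) :=
  monotoneOn_of_le_succ Set.ordConnected_Iic fun j _ _ hj =>
    h j (Order.succ_le_iff.mp hj)

theorem Matrix.norm_exp_smul_mulVec_le_s5 {m : ℕ} {κ t r : ℝ} {A : Matrix (Fin m) (Fin m) ℝ}
    (hA : ∀ s : ℝ, 0 ≤ s → ‖NormedSpace.exp (s • A)‖ ≤ Real.exp (-κ * s)) (ht : 0 ≤ t)
    {v : Fin m → ℝ} (hv : ‖v‖ ≤ r) :
    ‖(NormedSpace.exp (t • A)).mulVec v‖ ≤ Real.exp (-κ * t) * r :=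
  (Matrix.linfty_opNorm_mulVec _ _).trans <|
    mul_le_mul (hA t ht) hv (norm_nonneg _) (Real.exp_nonneg _)

theorem stmt_5_general (m : ℕ) (γ κ τ : ℝ) (hτ : 0 < τ)
    (Lκ : Matrix (Fin m) (Fin m) ℝ)
    (hsemi : ∀ t : ℝ, 0 ≤ t → ‖NormedSpace.exp (t • Lκ)‖ ≤ Real.exp (-κ * t))
    (N : (Fin m → ℝ) → (Fin m → ℝ))
    (hN : ∀ w : Fin m → ℝ, ‖w‖ ≤ γ → ‖N w‖ ≤ κ * γ)
    (i : ℕ) (hi : 1 ≤ i)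
    (a : ℕ → ℝ) (ha : ∀ j < i, 0 ≤ a j)
    (c : ℕ → ℝ) (hc0 : c 0 = 0) (hmono : ∀ j < i, c j ≤ c (j + 1))
    (u : ℕ → (Fin m → ℝ)) (hu : ∀ j < i, ‖u j‖ ≤ γ)
    (ui : Fin m → ℝ)
    (hui : ui = (NormedSpace.exp ((c i * τ) • Lκ)).mulVec (u 0) +
      τ • ∑ j ∈ Finset.range i,
        a j • (NormedSpace.exp (((c i - c j) * τ) • Lκ)).mulVec (N (u j))) :
    ‖ui‖ ≤ (Real.exp (-(c i) * (κ * τ)) +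
      (κ * τ) * ∑ j ∈ Finset.range i, a j * Real.exp (-(c i - c j) * (κ * τ))) * γ := by
  have hc := monotoneOn_Iic_of_le_succ hmono
  have hci : 0 ≤ c i :=
    hc0 ▸ hc (Set.mem_Iic.2 (Nat.zero_le i)) Set.self_mem_Iic (Nat.zero_le i)
  have hfirst := Matrix.norm_exp_smul_mulVec_le_s5 hsemi (mul_nonneg hci hτ.le) (hu 0 hi)
  have hstage : ∀ j ∈ Finset.range i,
      ‖a j • (NormedSpace.exp (((c i - c j) * τ) • Lκ)).mulVec (N (u j))‖ ≤
        a j * (Real.exp (-κ * ((c i - c j) * τ)) * (κ * γ)) := by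
    intro j hj
    have hji : j < i := Finset.mem_range.mp hj
    have hcj : c j ≤ c i := hc (Set.mem_Iic.2 hji.le) Set.self_mem_Iic hji.le
    rw [norm_smul, Real.norm_of_nonneg (ha j hji)]
    exact mul_le_mul_of_nonneg_left (Matrix.norm_exp_smul_mulVec_le_s5 hsemi
      (mul_nonneg (sub_nonneg.2 hcj) hτ.le) (hN _ (hu j hji))) (ha j hji)
  calc ‖ui‖ ≤ Real.exp (-κ * (c i * τ)) * γ +
        τ * ∑ j ∈ Finset.range i, a j * (Real.exp (-κ * ((c i - c j) * τ)) * (κ * γ)) := by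
        rw [hui]
        refine (norm_add_le _ _).trans (add_le_add hfirst ?_)
        rw [norm_smul, Real.norm_of_nonneg hτ.le]
        exact mul_le_mul_of_nonneg_left
          ((norm_sum_le _ _).trans (Finset.sum_le_sum hstage)) hτ.le
    _ = _ := by
        simp only [add_mul, Finset.mul_sum, Finset.sum_mul]
        congr 1
        · ring_nf
        · refine Finset.sum_congr rfl fun j _ => ?_
          ring_nf

/-- Remark 3.3 (sharp single-stage bound): if all previous stages lie in the `γ`-ball, the
stage `u^{(i)} = exp(cᵢτL_κ)u^{(0)} + τ Σ_{j<i} aᵢⱼ exp((cᵢ−cⱼ)τL_κ) N(u^{(j)})` satisfies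
`‖u^{(i)}‖ ≤ gᵢ(κτ)γ` with `gᵢ(x) = e^{−cᵢx} + x Σ_{j<i} aᵢⱼ e^{−(cᵢ−cⱼ)x}`. -/
theorem stmt_5 (m : ℕ) (γ κ τ : ℝ) (hγ : 0 < γ) (hκ : 0 < κ) (hτ : 0 < τ)
    (L Lκ : Matrix (Fin m) (Fin m) ℝ)
    (hLκ : Lκ = L - κ • (1 : Matrix (Fin m) (Fin m) ℝ))
    (hsemi : ∀ t : ℝ, 0 ≤ t → ‖NormedSpace.exp (t • Lκ)‖ ≤ Real.exp (-κ * t))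
    (N : (Fin m → ℝ) → (Fin m → ℝ))
    (hN : ∀ w : Fin m → ℝ, ‖w‖ ≤ γ → ‖N w‖ ≤ κ * γ)
    (i : ℕ) (hi : 1 ≤ i)
    (a : ℕ → ℝ) (ha : ∀ j < i, 0 ≤ a j)
    (c : ℕ → ℝ) (hc0 : c 0 = 0) (hmono : ∀ j < i, c j ≤ c (j + 1))
    (u : ℕ → (Fin m → ℝ)) (hu : ∀ j < i, ‖u j‖ ≤ γ)
    (ui : Fin m → ℝ)
    (hui : ui = (NormedSpace.exp ((c i * τ) • Lκ)).mulVec (u 0) +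
      τ • ∑ j ∈ Finset.range i,
        a j • (NormedSpace.exp (((c i - c j) * τ) • Lκ)).mulVec (N (u j))) :
    ‖ui‖ ≤ (Real.exp (-(c i) * (κ * τ)) +
      (κ * τ) * ∑ j ∈ Finset.range i, a j * Real.exp (-(c i - c j) * (κ * τ))) * γ :=
  stmt_5_general m γ κ τ hτ Lκ hsemi N hN i hi a ha c hc0 hmono u hu ui hui
end

section
/- Let γ > 0, κ > 0, τ > 0, and let L be a real m × m matrix with ‖exp(t L_κ)‖_∞ ≤ e^{−κt} for all t ≥ 0, where L_κ = L − κI. Let N : ℝ^m → ℝ^m satisfy ‖N(w)‖ ≤ κγ whenever ‖w‖ ≤ γ. Let s ≥ 1; for 1 ≤ i ≤ s and 0 ≤ j ≤ i−1 let α_{ij} ≥ 0 with Σ_{j=0}^{i−1} α_{ij} = 1, and β_{ij} ≥ 0 with β_{ij} = 0 whenever α_{ij} = 0. Let 0 = c₀ ≤ c₁ ≤ ⋯ ≤ c_s, and assume that β_{ij}/α_{ij} ≤ c_i − c_j whenever α_{ij} ≠ 0. Define the SSP-sIFRK stages by u^{(0)} = uⁿ and u^{(i)} = Σ_{j=0}^{i−1}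 exp((c_i − c_j) τ L_κ) (α_{ij} u^{(j)} + τ β_{ij} N(u^{(j)})) for 1 ≤ i ≤ s, and set u^{n+1} = u^{(s)}. Then if ‖uⁿ‖ ≤ γ, one has ‖u^{(i)}‖ ≤ γ for all 1 ≤ i ≤ s; in particular ‖u^{n+1}‖ ≤ γ for every τ > 0. -/
attribute [local instance] Matrix.linftyOpNormedRing Matrix.linftyOpNormedAlgebra

/-!
Stage `i` is a sum over `j < i` of `exp(h L_κ) (αᵢⱼ u⁽ʲ⁾ + τβᵢⱼ N(u⁽ʲ⁾))` with `h = (cᵢ - cⱼ)τ ≥ 0`.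
If the earlier stages lie in the `γ`-ball, the ratio condition `τβᵢⱼ ≤ αᵢⱼ h` bounds such a term by
`e^{-κh} αᵢⱼ (1 + κh) γ ≤ αᵢⱼ γ`, since `1 + x ≤ eˣ`; summing with `∑ⱼ αᵢⱼ = 1` puts stage `i` in
the ball as well. The damping `e^{-κh}` of the stabilized semigroup absorbs the growth of the
explicit nonlinear term, which is why no restriction on `τ` arises.
-/

open Finset Matrix

lemma monotoneOn_Iic_of_le_succ_s6 {α : Type*} [Preorder α] {f : ℕ → α} {s : ℕ}
    (hf : ∀ n < s, f n ≤ f (n + 1)) : MonotoneOn f (Set.Iic s) := by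
  intro j _ i (his : i ≤ s) hji
  induction i, hji using Nat.le_induction with
  | base => rfl
  | succ k _ ih => exact (ih (by omega)).trans (hf k (by omega))

lemma le_mul_of_div_le_of_eq_zero {a b d : ℝ} (ha : 0 ≤ a) (hb : a = 0 → b = 0)
    (hd : a ≠ 0 → b / a ≤ d) : b ≤ a * d := by
  rcases ha.eq_or_lt with rfl | ha
  · simp [hb rfl]
  · rw [← div_le_iff₀' ha]
    exact hd ha.ne'

lemma exp_neg_mul_mul_add_mul_le {κ h a q : ℝ} (hκ : 0 ≤ κ) (ha : 0 ≤ a) (hq : q ≤ a * h) :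
    Real.exp (-κ * h) * (a + κ * q) ≤ a := by
  have hgrowth : a + κ * q ≤ a * Real.exp (κ * h) := calc
    a + κ * q ≤ a * (κ * h + 1) := by linarith [mul_le_mul_of_nonneg_left hq hκ]
    _ ≤ a * Real.exp (κ * h) := mul_le_mul_of_nonneg_left (Real.add_one_le_exp _) ha
  calc Real.exp (-κ * h) * (a + κ * q)
      ≤ Real.exp (-κ * h) * (a * Real.exp (κ * h)) :=
        mul_le_mul_of_nonneg_left hgrowth (Real.exp_pos _).le
    _ = a := by rw [mul_left_comm, ← Real.exp_add, neg_mul, neg_add_cancel, Real.exp_zero, mul_one]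

lemma Matrix.norm_mulVec_smul_add_smul_le {n : Type*} [Fintype n] [DecidableEq n]
    {E : Matrix n n ℝ} {v w : n → ℝ} {κ γ h a q : ℝ} (hE : ‖E‖ ≤ Real.exp (-κ * h)) (hκ : 0 ≤ κ)
    (hv : ‖v‖ ≤ γ) (hw : ‖w‖ ≤ κ * γ) (ha : 0 ≤ a) (hq₀ : 0 ≤ q) (hq : q ≤ a * h) :
    ‖E *ᵥ (a • v + q • w)‖ ≤ a * γ := by
  have hγ : 0 ≤ γ := (norm_nonneg v).trans hv
  have hvw : ‖a • v + q • w‖ ≤ a * γ + q * (κ * γ) := by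
    refine (norm_add_le _ _).trans (add_le_add ?_ ?_)
    · rw [norm_smul, Real.norm_of_nonneg ha]
      exact mul_le_mul_of_nonneg_left hv ha
    · rw [norm_smul, Real.norm_of_nonneg hq₀]
      exact mul_le_mul_of_nonneg_left hw hq₀
  calc ‖E *ᵥ (a • v + q • w)‖ ≤ ‖E‖ * ‖a • v + q • w‖ := Matrix.linfty_opNorm_mulVec _ _
    _ ≤ Real.exp (-κ * h) * (a * γ + q * (κ * γ)) :=
        mul_le_mul hE hvw (norm_nonneg _) (Real.exp_pos _).le
    _ = Real.exp (-κ * h) * (a + κ * q) * γ := by ring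
    _ ≤ a * γ := mul_le_mul_of_nonneg_right (exp_neg_mul_mul_add_mul_le hκ ha hq) hγ

theorem stmt_6_general (m : ℕ) (γ κ τ : ℝ) (hκ : 0 < κ) (hτ : 0 < τ)
    (Lκ : Matrix (Fin m) (Fin m) ℝ)
    (hsemi : ∀ t : ℝ, 0 ≤ t → ‖NormedSpace.exp (t • Lκ)‖ ≤ Real.exp (-κ * t))
    (N : (Fin m → ℝ) → (Fin m → ℝ))
    (hN : ∀ w : Fin m → ℝ, ‖w‖ ≤ γ → ‖N w‖ ≤ κ * γ)
    (s : ℕ)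
    (α β : ℕ → ℕ → ℝ) (c : ℕ → ℝ)
    (hα : ∀ i, 1 ≤ i → i ≤ s → ∀ j < i, 0 ≤ α i j)
    (hαsum : ∀ i, 1 ≤ i → i ≤ s → ∑ j ∈ Finset.range i, α i j = 1)
    (hβ : ∀ i, 1 ≤ i → i ≤ s → ∀ j < i, 0 ≤ β i j)
    (hβ0 : ∀ i, 1 ≤ i → i ≤ s → ∀ j < i, α i j = 0 → β i j = 0)
    (hmono : ∀ i < s, c i ≤ c (i + 1))
    (hratio : ∀ i, 1 ≤ i → i ≤ s → ∀ j < i, α i j ≠ 0 → β i j / α i j ≤ c i - c j)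
    (un : Fin m → ℝ) (hun : ‖un‖ ≤ γ)
    (u : ℕ → (Fin m → ℝ)) (hu0 : u 0 = un)
    (hu : ∀ i, 1 ≤ i → i ≤ s →
      u i = ∑ j ∈ Finset.range i,
        (NormedSpace.exp (((c i - c j) * τ) • Lκ)).mulVec
          (α i j • u j + (τ * β i j) • N (u j))) :
    ∀ i, 1 ≤ i → i ≤ s → ‖u i‖ ≤ γ := by
  have hc := monotoneOn_Iic_of_le_succ_s6 hmono
  suffices hstages : ∀ i ≤ s, ‖u i‖ ≤ γ from fun i _ his ↦ hstages i his
  intro i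
  induction i using Nat.strong_induction_on with
  | _ i ih =>
    intro his
    rcases Nat.eq_zero_or_pos i with rfl | hi
    · rwa [hu0]
    rw [hu i hi his, ← one_mul γ, ← hαsum i hi his, sum_mul]
    refine norm_sum_le_of_le _ fun j hj ↦ ?_
    have hji : j < i := mem_range.mp hj
    have hstep : 0 ≤ (c i - c j) * τ :=
      mul_nonneg (sub_nonneg.2 (hc (hji.le.trans his) his hji.le)) hτ.le
    have hβα : β i j ≤ α i j * (c i - c j) :=
      le_mul_of_div_le_of_eq_zero (hα i hi his j hji) (hβ0 i hi his j hji) (hratio i hi his j hji)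
    have huj := ih j hji (hji.le.trans his)
    refine Matrix.norm_mulVec_smul_add_smul_le (hsemi _ hstep) hκ.le huj (hN _ huj)
      (hα i hi his j hji) (mul_nonneg hτ.le (hβ i hi his j hji)) ?_
    linarith [mul_le_mul_of_nonneg_right hβα hτ.le]

/-- Theorem 3.5: unconditional MBP preservation for the SSP-sIFRK method in Shu–Osher form.
With convex-combination coefficients `αᵢⱼ`, nonnegative `βᵢⱼ` vanishing when `αᵢⱼ = 0`,
nondecreasing abscissas, and `βᵢⱼ/αᵢⱼ ≤ cᵢ − cⱼ` whenever `αᵢⱼ ≠ 0`, if `‖uⁿ‖ ≤ γ` then all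
stages, in particular `u^{n+1} = u^{(s)}`, are bounded by `γ` for any `τ > 0`. -/
theorem stmt_6 (m : ℕ) (γ κ τ : ℝ) (hγ : 0 < γ) (hκ : 0 < κ) (hτ : 0 < τ)
    (L Lκ : Matrix (Fin m) (Fin m) ℝ)
    (hLκ : Lκ = L - κ • (1 : Matrix (Fin m) (Fin m) ℝ))
    (hsemi : ∀ t : ℝ, 0 ≤ t → ‖NormedSpace.exp (t • Lκ)‖ ≤ Real.exp (-κ * t))
    (N : (Fin m → ℝ) → (Fin m → ℝ))
    (hN : ∀ w : Fin m → ℝ, ‖w‖ ≤ γ → ‖N w‖ ≤ κ * γ)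
    (s : ℕ) (hs : 1 ≤ s)
    (α β : ℕ → ℕ → ℝ) (c : ℕ → ℝ)
    (hα : ∀ i, 1 ≤ i → i ≤ s → ∀ j < i, 0 ≤ α i j)
    (hαsum : ∀ i, 1 ≤ i → i ≤ s → ∑ j ∈ Finset.range i, α i j = 1)
    (hβ : ∀ i, 1 ≤ i → i ≤ s → ∀ j < i, 0 ≤ β i j)
    (hβ0 : ∀ i, 1 ≤ i → i ≤ s → ∀ j < i, α i j = 0 → β i j = 0)
    (hc0 : c 0 = 0)
    (hmono : ∀ i < s, c i ≤ c (i + 1))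
    (hratio : ∀ i, 1 ≤ i → i ≤ s → ∀ j < i, α i j ≠ 0 → β i j / α i j ≤ c i - c j)
    (un : Fin m → ℝ) (hun : ‖un‖ ≤ γ)
    (u : ℕ → (Fin m → ℝ)) (hu0 : u 0 = un)
    (hu : ∀ i, 1 ≤ i → i ≤ s →
      u i = ∑ j ∈ Finset.range i,
        (NormedSpace.exp (((c i - c j) * τ) • Lκ)).mulVec
          (α i j • u j + (τ * β i j) • N (u j))) :
    ∀ i, 1 ≤ i → i ≤ s → ‖u i‖ ≤ γ :=
  stmt_6_general m γ κ τ hκ hτ Lκ hsemi N hN s α β c hα hαsum hβ hβ0 hmono hratio un hun u hu0 hu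
end

section
/- Let s ≥ 2 be an integer. The function g_s(x) = e^{−x} + (x/(s−1)) Σ_{j=1}^{s−1} e^{−(s−j)x/s} is nonincreasing on [0, ∞). -/
/-!
Write `s = n + 1` and `u = x / s`. Reflecting `j ↦ s - j` turns `g_s` into
`e^{-x} + (x / n) ∑_{k=1}^n e^{-k u}`, whose derivative is
`-e^{-x} + (1 / n) ∑_{k=1}^n (1 - k u) e^{-k u}`. By induction on `n`, using `1 - u ≤ e^{-u}`,
the sum is at most `n e^{-(n+1) u} = n e^{-x}`, so the derivative is nonpositive on all of `ℝ`.
-/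

open Finset Real

lemma sum_Icc_one_sub_mul_mul_exp_neg_le (n : ℕ) (u : ℝ) :
    ∑ k ∈ Icc 1 n, (1 - k * u) * exp (-(k * u)) ≤ n * exp (-((n + 1) * u)) := by
  induction n with
  | zero => simp
  | succ n ih =>
    have hstep : (1 - u) * exp (-((n + 1) * u)) ≤ exp (-((n + 1 + 1) * u)) := by
      rw [show -((n + 1 + 1) * u) = -u + -((n + 1) * u) by ring, exp_add]
      gcongr
      linarith [add_one_le_exp (-u)]
    rw [sum_Icc_succ_top (by omega)]
    push_cast
    nlinarith [mul_le_mul_of_nonneg_left hstep (by positivity : (0 : ℝ) ≤ n + 1)]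

lemma sum_Icc_one_reflect (n : ℕ) (f : ℝ → ℝ) :
    ∑ j ∈ Icc 1 n, f ((n + 1 : ℝ) - j) = ∑ k ∈ Icc 1 n, f k := by
  refine sum_nbij' (fun j => n + 1 - j) (fun k => n + 1 - k) ?_ ?_ ?_ ?_ ?_ <;>
    intro j hj <;> simp only [mem_Icc] at hj ⊢
  · omega
  · omega
  · omega
  · omega
  · rw [Nat.cast_sub (by omega)]; push_cast; ring_nf

lemma hasDerivAt_mul_exp_neg_mul (a x : ℝ) :
    HasDerivAt (fun y => y * exp (-(a * y))) ((1 - a * x) * exp (-(a * x))) x :=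
  ((hasDerivAt_id' x).fun_mul ((hasDerivAt_id' x).const_mul a).fun_neg.exp).congr_deriv (by ring)

theorem antitone_exp_neg_add_div_mul_sum_exp (n : ℕ) :
    Antitone fun x : ℝ => exp (-x) + x / n * ∑ k ∈ Icc 1 n, exp (-(k * x) / (n + 1)) := by
  have hform : (fun x : ℝ => exp (-x) + x / n * ∑ k ∈ Icc 1 n, exp (-(k * x) / (n + 1))) =
      fun x => exp (-x) + (∑ k ∈ Icc 1 n, x * exp (-(k / (n + 1) * x))) / n := by
    ext x
    rw [← mul_sum, mul_div_right_comm]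
    congr 3 with k
    ring_nf
  have hderiv (x : ℝ) :
      HasDerivAt (fun x : ℝ => exp (-x) + (∑ k ∈ Icc 1 n, x * exp (-(k / (n + 1) * x))) / n)
      (-exp (-x) + (∑ k ∈ Icc 1 n, (1 - k / (n + 1) * x) * exp (-(k / (n + 1) * x))) / n) x :=
    ((hasDerivAt_id' x).fun_neg.exp.fun_add ((HasDerivAt.fun_sum (u := Icc 1 n) fun k _ =>
      hasDerivAt_mul_exp_neg_mul (k / (n + 1)) x).div_const n)).congr_deriv (by ring)
  rw [hform]
  refine antitone_of_deriv_nonpos (fun x => (hderiv x).differentiableAt) fun x => ?_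
  rw [(hderiv x).deriv, neg_add_nonpos_iff]
  refine div_le_of_le_mul₀ n.cast_nonneg (exp_pos _).le ?_
  have key := sum_Icc_one_sub_mul_mul_exp_neg_le n (x / (n + 1))
  rw [mul_div_cancel₀ _ (by positivity)] at key
  refine (Eq.trans_le (sum_congr rfl fun k _ => ?_) key).trans_eq (mul_comm _ _)
  ring_nf

theorem stmt_13_general (s : ℕ) :
    AntitoneOn (fun x : ℝ =>
      Real.exp (-x) +
        (x / ((s : ℝ) - 1)) * ∑ j ∈ Finset.Icc 1 (s - 1), Real.exp (-(((s : ℝ) - j) * x) / s))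
      (Set.Ici (0 : ℝ)) := by
  refine Antitone.antitoneOn ?_ _
  rcases s with _ | n
  · simpa using antitone_exp_neg_add_div_mul_sum_exp 0
  · convert antitone_exp_neg_add_div_mul_sum_exp n using 4 with x
    · push_cast; ring
    · push_cast
      exact sum_Icc_one_reflect n fun t => exp (-(t * x) / (n + 1))

/-- The final-stage stability function of sIFRK(s,2):
`g_s(x) = e^{−x} + (x/(s−1)) Σ_{j=1}^{s−1} e^{−(s−j)x/s}` is nonincreasing on `[0, ∞)`. -/
theorem stmt_13 (s : ℕ) (hs : 2 ≤ s) :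
    AntitoneOn (fun x : ℝ =>
      Real.exp (-x) +
        (x / ((s : ℝ) - 1)) * ∑ j ∈ Finset.Icc 1 (s - 1), Real.exp (-(((s : ℝ) - j) * x) / s))
      (Set.Ici (0 : ℝ)) :=
  stmt_13_general s
end

section
/- The function g₃(x) = e^{−x} + (x/4) e^{−x} + (3x/4) e^{−x/3} is nonincreasing on [0, ∞). -/
/-!
Writing `y = x / 3`, one finds `4 g₃'(x) = 3 e^{-x} ((1 - y) e^{2y} - (1 + y))`, so monotonicity reduces to
`(1 - y) e^{2y} ≤ 1 + y` for `y ≥ 0`. For `y ≥ 1` the left side is nonpositive; for `y < 1` the inequality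
reads `2y ≤ log (1 + y) - log (1 - y) = 2 artanh y`, which holds because the Taylor series of
`2 artanh y` has nonnegative terms and starts with `2y`.
-/

open Real Set

lemma two_mul_le_log_one_add_sub_log_one_sub {y : ℝ} (h0 : 0 ≤ y) (h1 : y < 1) :
    2 * y ≤ log (1 + y) - log (1 - y) := by
  have hs := hasSum_log_sub_log_of_abs_lt_one (abs_lt.2 ⟨by linarith, h1⟩)
  simpa using le_hasSum hs 0 fun k _ => by positivity

lemma one_sub_mul_exp_two_mul_le {y : ℝ} (hy : 0 ≤ y) : (1 - y) * exp (2 * y) ≤ 1 + y := by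
  rcases lt_or_ge y 1 with h1 | h1
  · have h : exp (2 * y) ≤ (1 + y) / (1 - y) :=
      calc exp (2 * y) ≤ exp (log (1 + y) - log (1 - y)) :=
            exp_le_exp.2 (two_mul_le_log_one_add_sub_log_one_sub hy h1)
        _ = (1 + y) / (1 - y) := by rw [exp_sub, exp_log (by linarith), exp_log (by linarith)]
    rwa [le_div_iff₀ (by linarith), mul_comm] at h
  · nlinarith [exp_pos (2 * y)]

noncomputable def heunSIFRKStability (x : ℝ) : ℝ :=
  exp (-x) + (x / 4) * exp (-x) + (3 * x / 4) * exp (-x / 3)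

lemma hasDerivAt_heunSIFRKStability (x : ℝ) :
    HasDerivAt heunSIFRKStability (((3 - x) * exp (-x / 3) - (3 + x) * exp (-x)) / 4) x := by
  have he := (hasDerivAt_neg x).exp
  have he3 := ((hasDerivAt_neg x).div_const 3).exp
  have h := (he.add (((hasDerivAt_id' x).div_const 4).mul he)).add
    ((((hasDerivAt_id' x).const_mul 3).div_const 4).mul he3)
  exact h.congr_deriv (by ring)

lemma heunSIFRKStability_deriv_nonpos {x : ℝ} (hx : 0 ≤ x) :
    ((3 - x) * exp (-x / 3) - (3 + x) * exp (-x)) / 4 ≤ 0 := by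
  have h := mul_le_mul_of_nonneg_right (one_sub_mul_exp_two_mul_le (y := x / 3) (by positivity))
    (exp_pos (-x)).le
  have hsplit : exp (-x / 3) = exp (2 * (x / 3)) * exp (-x) := by rw [← exp_add]; ring_nf
  rw [hsplit]
  linarith

/-- The final-stage stability function of Heun-sIFRK(3,3):
`g₃(x) = e^{−x} + (x/4)e^{−x} + (3x/4)e^{−x/3}` is nonincreasing on `[0, ∞)`. -/
theorem stmt_15 :
    AntitoneOn
      (fun x : ℝ => Real.exp (-x) + (x / 4) * Real.exp (-x) + (3 * x / 4) * Real.exp (-x / 3))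
      (Set.Ici (0 : ℝ)) := by
  have hderiv := hasDerivAt_heunSIFRKStability
  refine antitoneOn_of_hasDerivWithinAt_nonpos (convex_Ici 0)
    (fun x _ => (hderiv x).continuousAt.continuousWithinAt)
    (fun x _ => (hderiv x).hasDerivWithinAt) fun x hx => ?_
  rw [interior_Ici] at hx
  exact heunSIFRKStability_deriv_nonpos hx.le
end

section
/- Let s ≥ 2 be an integer. The function g_s(x) = e^{−x} + (x/s) Σ_{j=0}^{s−2} e^{−((s−1−j)/(s−1)) x} + x/s is unbounded above on [0, ∞); in particular it is not nonincreasing on [0, ∞), i.e., there exist 0 ≤ x₁ < x₂ with g_s(x₁) < g_s(x₂). -/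
/-- Remark 4.2: the final-stage stability function of SSP-sIFRK(s,2),
`g_s(x) = e^{−x} + (x/s) Σ_{j=0}^{s−2} e^{−((s−1−j)/(s−1))x} + x/s`, is unbounded above on
`[0, ∞)`; in particular it is not nonincreasing there. -/
theorem stmt_16 (s : ℕ) (hs : 2 ≤ s) :
    (∀ M : ℝ, ∃ x : ℝ, 0 ≤ x ∧ M <
      Real.exp (-x) +
        (x / s) * ∑ j ∈ Finset.range (s - 1),
          Real.exp (-(((s : ℝ) - 1 - j) / ((s : ℝ) - 1)) * x) + x / s) ∧
    ∃ x₁ x₂ : ℝ, 0 ≤ x₁ ∧ x₁ < x₂ ∧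
      (Real.exp (-x₁) +
        (x₁ / s) * ∑ j ∈ Finset.range (s - 1),
          Real.exp (-(((s : ℝ) - 1 - j) / ((s : ℝ) - 1)) * x₁) + x₁ / s) <
      (Real.exp (-x₂) +
        (x₂ / s) * ∑ j ∈ Finset.range (s - 1),
          Real.exp (-(((s : ℝ) - 1 - j) / ((s : ℝ) - 1)) * x₂) + x₂ / s) := by
  have hs0 : (0:ℝ) < s := by positivity
  have key : ∀ M : ℝ, ∃ x : ℝ, 0 ≤ x ∧ M <
      Real.exp (-x) +
        (x / s) * ∑ j ∈ Finset.range (s - 1),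
          Real.exp (-(((s : ℝ) - 1 - j) / ((s : ℝ) - 1)) * x) + x / s := by
    intro M
    refine ⟨s * (|M| + 1), by positivity, ?_⟩
    have h1 : (s * (|M| + 1)) / s = |M| + 1 := by field_simp
    have hsum : 0 ≤ (s * (|M| + 1) / s) * ∑ j ∈ Finset.range (s - 1),
        Real.exp (-(((s : ℝ) - 1 - j) / ((s : ℝ) - 1)) * (s * (|M| + 1))) := by
      apply mul_nonneg (by positivity)
      exact Finset.sum_nonneg fun j _ => (Real.exp_pos _).le
    have hM : M < |M| + 1 := lt_of_le_of_lt (le_abs_self M) (by linarith)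
    nlinarith [Real.exp_pos (-(s * (|M| + 1) : ℝ))]
  refine ⟨key, ?_⟩
  obtain ⟨x, hx0, hx⟩ := key (Real.exp (-(0:ℝ)) +
        ((0:ℝ) / s) * ∑ j ∈ Finset.range (s - 1),
          Real.exp (-(((s : ℝ) - 1 - j) / ((s : ℝ) - 1)) * 0) + 0 / s)
  refine ⟨0, x, le_refl 0, ?_, hx⟩
  rcases hx0.lt_or_eq with h | h
  · exact h
  · exfalso; rw [← h] at hx; exact lt_irrefl _ hx
end

section
/- Let γ > 0, κ > 0, τ > 0, and let L be a real m × m matrix with ‖exp(t L_κ)‖_∞ ≤ e^{−κt} for all t ≥ 0, where L_κ = L − κI. Let N : ℝ^m → ℝ^m satisfy ‖N(w)‖ ≤ κγ whenever ‖w‖ ≤ γ. Then for every uⁿ ∈ ℝ^m with ‖uⁿ‖ ≤ γ, the sIFRK(1,1) update u^{n+1} = exp(τ L_κ)(uⁿ + τ N(uⁿ)) satisfies ‖u^{n+1}‖ ≤ (1 + κτ) e^{−κτ} γ ≤ γ. -/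
/-!
The stabilized explicit Euler step moves a point of the `γ`-ball by at most `κτγ`, so it lands
in the `(1 + κτ)γ`-ball; the semigroup bound then contracts by `e^{-κτ}`. The resulting factor
`(1 + κτ)e^{-κτ}` is at most `1` because `1 + x ≤ eˣ`.
-/

attribute [local instance] Matrix.linftyOpNormedRing Matrix.linftyOpNormedAlgebra

lemma Real.one_add_mul_exp_neg_le_one (x : ℝ) : (1 + x) * Real.exp (-x) ≤ 1 := by
  rw [Real.exp_neg, mul_inv_le_iff₀ (Real.exp_pos x), one_mul, add_comm]
  exact Real.add_one_le_exp x

lemma norm_add_smul_le_of_norm_le {E : Type*} [SeminormedAddCommGroup E] [NormedSpace ℝ E]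
    {u v : E} {τ γ c : ℝ} (hτ : 0 ≤ τ) (hu : ‖u‖ ≤ γ) (hv : ‖v‖ ≤ c * γ) :
    ‖u + τ • v‖ ≤ (1 + c * τ) * γ :=
  calc ‖u + τ • v‖ ≤ ‖u‖ + τ * ‖v‖ := (norm_add_le _ _).trans_eq (by rw [norm_smul_of_nonneg hτ])
    _ ≤ γ + τ * (c * γ) := by gcongr
    _ = (1 + c * τ) * γ := by ring

theorem stmt_18_general (m : ℕ) (γ κ τ : ℝ) (hγ : 0 < γ) (hτ : 0 < τ)
    (Lκ : Matrix (Fin m) (Fin m) ℝ)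
    (hsemi : ∀ t : ℝ, 0 ≤ t → ‖NormedSpace.exp (t • Lκ)‖ ≤ Real.exp (-κ * t))
    (N : (Fin m → ℝ) → (Fin m → ℝ))
    (hN : ∀ w : Fin m → ℝ, ‖w‖ ≤ γ → ‖N w‖ ≤ κ * γ)
    (un : Fin m → ℝ) (hun : ‖un‖ ≤ γ) :
    ‖(NormedSpace.exp (τ • Lκ)).mulVec (un + τ • N un)‖ ≤
        (1 + κ * τ) * Real.exp (-κ * τ) * γ ∧
      (1 + κ * τ) * Real.exp (-κ * τ) * γ ≤ γ := by
  refine ⟨?_, ?_⟩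
  · calc ‖(NormedSpace.exp (τ • Lκ)).mulVec (un + τ • N un)‖
        ≤ ‖NormedSpace.exp (τ • Lκ)‖ * ‖un + τ • N un‖ := Matrix.linfty_opNorm_mulVec _ _
      _ ≤ Real.exp (-κ * τ) * ((1 + κ * τ) * γ) :=
          mul_le_mul (hsemi τ hτ.le) (norm_add_smul_le_of_norm_le hτ.le hun (hN un hun))
            (norm_nonneg _) (Real.exp_pos _).le
      _ = (1 + κ * τ) * Real.exp (-κ * τ) * γ := by ring
  · rw [neg_mul]
    exact mul_le_of_le_one_left hγ.le (Real.one_add_mul_exp_neg_le_one (κ * τ))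

/-- Unconditional discrete MBP of sIFRK(1,1) with the sharp bound: if `‖uⁿ‖ ≤ γ`, then
`u^{n+1} = exp(τL_κ)(uⁿ + τN(uⁿ))` satisfies `‖u^{n+1}‖ ≤ (1+κτ)e^{−κτ}γ ≤ γ`. -/
theorem stmt_18 (m : ℕ) (γ κ τ : ℝ) (hγ : 0 < γ) (hκ : 0 < κ) (hτ : 0 < τ)
    (L Lκ : Matrix (Fin m) (Fin m) ℝ)
    (hLκ : Lκ = L - κ • (1 : Matrix (Fin m) (Fin m) ℝ))
    (hsemi : ∀ t : ℝ, 0 ≤ t → ‖NormedSpace.exp (t • Lκ)‖ ≤ Real.exp (-κ * t))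
    (N : (Fin m → ℝ) → (Fin m → ℝ))
    (hN : ∀ w : Fin m → ℝ, ‖w‖ ≤ γ → ‖N w‖ ≤ κ * γ)
    (un : Fin m → ℝ) (hun : ‖un‖ ≤ γ) :
    ‖(NormedSpace.exp (τ • Lκ)).mulVec (un + τ • N un)‖ ≤
        (1 + κ * τ) * Real.exp (-κ * τ) * γ ∧
      (1 + κ * τ) * Real.exp (-κ * τ) * γ ≤ γ :=
  stmt_18_general m γ κ τ hγ hτ Lκ hsemi N hN un hun
end
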